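/- arXiv:2104.04005 — 2 statements merged into one kernel-verified Lean document; each statement's English description precedes it below -/
import Mathlib

section
/- Let ξ be a nonzero vector in ℝ^N and let δ₁, δ₂ be nonzero vectors in ℝ^N with δ₁ ⊥ ξ and δ₂ ⊥ ξ. Then the gap between the subspace spanned by {ξ + δ₁, ξ} and the subspace spanned by {ξ + δ₂, ξ} equals the gap between the line spanned by δ₁ and the line spanned by δ₂, i.e., d(span(ξ+δ₁, ξ), span(ξ+δ₂, ξ)) = d(span(δ₁), span(δ₂)). -/
open scoped RealInnerProductSpace

/-- The orthogonal projection onto a subspace, as a continuous linear map on the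
ambient space. -/
noncomputable def orthProjCLM {E : Type*} [NormedAddCommGroup E] [InnerProductSpace ℝ E]
    [FiniteDimensional ℝ E] (U : Submodule ℝ E) : E →L[ℝ] E :=
  U.subtypeL.comp U.orthogonalProjectionOnto

/-- The gap metric between subspaces: the operator norm of the difference of the
orthogonal projections. -/
noncomputable def gap {E : Type*} [NormedAddCommGroup E] [InnerProductSpace ℝ E]
    [FiniteDimensional ℝ E] (U V : Submodule ℝ E) : ℝ :=
  ‖orthProjCLM U - orthProjCLM V‖

lemma orthProjCLM_sup {E : Type*} [NormedAddCommGroup E] [InnerProductSpace ℝ E]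
    [FiniteDimensional ℝ E] (U V : Submodule ℝ E)
    (h : ∀ u ∈ U, ∀ v ∈ V, ⟪u, v⟫ = 0) :
    orthProjCLM (U ⊔ V) = orthProjCLM U + orthProjCLM V := by
  ext x
  have hmem : (U.orthogonalProjectionOnto x : E) + (V.orthogonalProjectionOnto x : E) ∈ U ⊔ V :=
    Submodule.add_mem_sup (U.orthogonalProjectionOnto x).2 (V.orthogonalProjectionOnto x).2
  have key : ((U ⊔ V).orthogonalProjectionOnto x : E) =
      (U.orthogonalProjectionOnto x : E) + (V.orthogonalProjectionOnto x : E) := by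
    rw [← Submodule.starProjection_apply]
    apply Submodule.eq_starProjection_of_mem_of_inner_eq_zero hmem
    intro w hw
    rw [Submodule.mem_sup] at hw
    obtain ⟨u, hu, v, hv, rfl⟩ := hw
    have hxu : ⟪x - (U.orthogonalProjectionOnto x : E), u⟫ = 0 :=
      Submodule.starProjection_inner_eq_zero x u hu
    have hxv : ⟪x - (V.orthogonalProjectionOnto x : E), v⟫ = 0 :=
      Submodule.starProjection_inner_eq_zero x v hv
    have hUv : ⟪(U.orthogonalProjectionOnto x : E), v⟫ = 0 :=
      h _ (U.orthogonalProjectionOnto x).2 _ hv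
    have hVu : ⟪(V.orthogonalProjectionOnto x : E), u⟫ = 0 := by
      rw [real_inner_comm]; exact h _ hu _ (V.orthogonalProjectionOnto x).2
    have e1 : ⟪x - (U.orthogonalProjectionOnto x : E), u⟫
        = ⟪x, u⟫ - ⟪(U.orthogonalProjectionOnto x : E), u⟫ := inner_sub_left _ _ _
    have e2 : ⟪x - (V.orthogonalProjectionOnto x : E), v⟫
        = ⟪x, v⟫ - ⟪(V.orthogonalProjectionOnto x : E), v⟫ := inner_sub_left _ _ _
    rw [inner_sub_left, inner_add_right, inner_add_right, inner_add_left, inner_add_left]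
    rw [e1] at hxu; rw [e2] at hxv
    nlinarith [hxu, hxv, hUv, hVu]
  simpa [orthProjCLM] using key

lemma span_pair_eq {E : Type*} [NormedAddCommGroup E] [InnerProductSpace ℝ E]
    (ξ δ : E) :
    Submodule.span ℝ {ξ + δ, ξ} = Submodule.span ℝ {δ} ⊔ Submodule.span ℝ {ξ} := by
  apply le_antisymm
  · rw [Submodule.span_le]
    intro x hx
    simp only [Set.mem_insert_iff, Set.mem_singleton_iff] at hx
    rcases hx with h | h <;> rw [h]
    · exact Submodule.add_mem _
        (Submodule.mem_sup_right (Submodule.mem_span_singleton_self ξ))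
        (Submodule.mem_sup_left (Submodule.mem_span_singleton_self δ))
    · exact Submodule.mem_sup_right (Submodule.mem_span_singleton_self ξ)
  · apply sup_le <;> rw [Submodule.span_le] <;> intro x hx <;>
      rw [Set.mem_singleton_iff] at hx <;> rw [hx]
    · have h1 : ξ + δ ∈ Submodule.span ℝ ({ξ + δ, ξ} : Set E) :=
        Submodule.subset_span (by simp)
      have h2 : ξ ∈ Submodule.span ℝ ({ξ + δ, ξ} : Set E) :=
        Submodule.subset_span (by simp)
      simpa using Submodule.sub_mem _ h1 h2
    · exact Submodule.subset_span (by simp)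

theorem gap_span_perturbation {N : ℕ} (ξ δ₁ δ₂ : EuclideanSpace ℝ (Fin N))
    (hξ : ξ ≠ 0) (hδ₁ : δ₁ ≠ 0) (hδ₂ : δ₂ ≠ 0)
    (h₁ : ⟪δ₁, ξ⟫ = 0) (h₂ : ⟪δ₂, ξ⟫ = 0) :
    gap (Submodule.span ℝ {ξ + δ₁, ξ}) (Submodule.span ℝ {ξ + δ₂, ξ}) =
      gap (Submodule.span ℝ {δ₁}) (Submodule.span ℝ {δ₂}) := by
  have orth : ∀ δ : EuclideanSpace ℝ (Fin N), ⟪δ, ξ⟫ = 0 →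
      ∀ u ∈ Submodule.span ℝ ({δ} : Set (EuclideanSpace ℝ (Fin N))),
      ∀ v ∈ Submodule.span ℝ ({ξ} : Set (EuclideanSpace ℝ (Fin N))), ⟪u, v⟫ = 0 := by
    intro δ h u hu v hv
    rw [Submodule.mem_span_singleton] at hu hv
    obtain ⟨a, rfl⟩ := hu; obtain ⟨b, rfl⟩ := hv
    rw [real_inner_smul_left, real_inner_smul_right, h]; ring
  have e1 := orthProjCLM_sup _ _ (orth δ₁ h₁)
  have e2 := orthProjCLM_sup _ _ (orth δ₂ h₂)
  unfold gap
  rw [span_pair_eq ξ δ₁, span_pair_eq ξ δ₂, e1, e2]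
  congr 1
  abel
end

section
/- Let U₁ and U₂ be real N × k matrices with orthonormal columns, i.e., U₁ᵀU₁ = I_k and U₂ᵀU₂ = I_k, and set M = U₁ᵀU₂. Then, in the L²-operator norm on matrices, ‖U₁U₁ᵀ (I_N − U₂U₂ᵀ)‖² = ‖I_k − M Mᵀ‖. -/
open Matrix
open scoped Matrix.Norms.L2Operator

private lemma norm_le_one_of_orthonormal {N k : ℕ} (U : Matrix (Fin N) (Fin k) ℝ)
    (h : Uᵀ * U = 1) : ‖U‖ ≤ 1 := by
  have h1 : ‖U‖ * ‖U‖ = ‖(1 : Matrix (Fin k) (Fin k) ℝ)‖ := by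
    rw [← Matrix.l2_opNorm_conjTranspose_mul_self U,
      Matrix.conjTranspose_eq_transpose_of_trivial, h]
  have h2 : ‖(1 : Matrix (Fin k) (Fin k) ℝ)‖ * ‖(1 : Matrix (Fin k) (Fin k) ℝ)‖
      = ‖(1 : Matrix (Fin k) (Fin k) ℝ)‖ := by
    conv_rhs => rw [← mul_one (1 : Matrix (Fin k) (Fin k) ℝ)]
    rw [← Matrix.l2_opNorm_conjTranspose_mul_self (1 : Matrix (Fin k) (Fin k) ℝ)]
    congr 1
    simp
  have h3 : ‖(1 : Matrix (Fin k) (Fin k) ℝ)‖ ≤ 1 := by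
    rcases eq_or_ne ‖(1 : Matrix (Fin k) (Fin k) ℝ)‖ 0 with h0 | h0
    · simp [h0]
    · nlinarith [norm_nonneg (1 : Matrix (Fin k) (Fin k) ℝ)]
  nlinarith [norm_nonneg U]

private lemma norm_conj {N k : ℕ} (U : Matrix (Fin N) (Fin k) ℝ)
    (h : Uᵀ * U = 1) (B : Matrix (Fin k) (Fin k) ℝ) : ‖U * B * Uᵀ‖ = ‖B‖ := by
  have hU : ‖U‖ ≤ 1 := norm_le_one_of_orthonormal U h
  have hUt : ‖Uᵀ‖ ≤ 1 := by
    rw [← Matrix.conjTranspose_eq_transpose_of_trivial, Matrix.l2_opNorm_conjTranspose]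
    exact hU
  apply le_antisymm
  · calc ‖U * B * Uᵀ‖ ≤ ‖U * B‖ * ‖Uᵀ‖ := Matrix.l2_opNorm_mul _ _
      _ ≤ ‖U‖ * ‖B‖ * ‖Uᵀ‖ :=
        mul_le_mul_of_nonneg_right (Matrix.l2_opNorm_mul _ _) (norm_nonneg _)
      _ ≤ 1 * ‖B‖ * 1 := by
        apply mul_le_mul _ hUt (norm_nonneg _) (by positivity)
        exact mul_le_mul_of_nonneg_right hU (norm_nonneg _)
      _ = ‖B‖ := by ring
  · have hB : B = Uᵀ * (U * B * Uᵀ) * U := by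
      have e : Uᵀ * (U * B * Uᵀ) * U = (Uᵀ * U) * B * (Uᵀ * U) := by
        simp only [Matrix.mul_assoc]
      rw [e, h, Matrix.one_mul, Matrix.mul_one]
    calc ‖B‖ = ‖Uᵀ * (U * B * Uᵀ) * U‖ := by rw [← hB]
      _ ≤ ‖Uᵀ * (U * B * Uᵀ)‖ * ‖U‖ := Matrix.l2_opNorm_mul _ _
      _ ≤ ‖Uᵀ‖ * ‖U * B * Uᵀ‖ * ‖U‖ :=
        mul_le_mul_of_nonneg_right (Matrix.l2_opNorm_mul _ _) (norm_nonneg _)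
      _ ≤ 1 * ‖U * B * Uᵀ‖ * 1 := by
        apply mul_le_mul _ hU (norm_nonneg _) (by positivity)
        exact mul_le_mul_of_nonneg_right hUt (norm_nonneg _)
      _ = ‖U * B * Uᵀ‖ := by ring

theorem l2OpNorm_angle_operator_sq {N k : ℕ}
    (U₁ U₂ : Matrix (Fin N) (Fin k) ℝ)
    (h₁ : U₁ᵀ * U₁ = 1) (h₂ : U₂ᵀ * U₂ = 1) :
    ‖U₁ * U₁ᵀ * (1 - U₂ * U₂ᵀ)‖ ^ 2 = ‖(1 : Matrix (Fin k) (Fin k) ℝ) - (U₁ᵀ * U₂) * (U₁ᵀ * U₂)ᵀ‖ := by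
  set A := U₁ * U₁ᵀ * (1 - U₂ * U₂ᵀ) with hA
  have key : A * Aᵀ = U₁ * ((1 : Matrix (Fin k) (Fin k) ℝ) - (U₁ᵀ * U₂) * (U₁ᵀ * U₂)ᵀ) * U₁ᵀ := by
    rw [hA]
    simp only [Matrix.transpose_mul, Matrix.transpose_sub, Matrix.transpose_one,
      Matrix.transpose_transpose, Matrix.mul_sub, Matrix.sub_mul, Matrix.mul_one,
      Matrix.one_mul]
    simp only [Matrix.mul_assoc]
    rw [← Matrix.mul_assoc U₂ᵀ U₂, h₂]
    rw [← Matrix.mul_assoc U₁ᵀ U₁, h₁]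
    simp only [Matrix.one_mul, Matrix.mul_one]
    abel
  have h1 : ‖A‖ ^ 2 = ‖A * Aᵀ‖ := by
    rw [sq, ← Matrix.l2_opNorm_conjTranspose A, ← Matrix.l2_opNorm_conjTranspose_mul_self Aᴴ,
      Matrix.conjTranspose_conjTranspose, Matrix.conjTranspose_eq_transpose_of_trivial]
  rw [h1, key, norm_conj U₁ h₁]
end
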